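/- arXiv:2403.18053 — 2 statements merged into one kernel-verified Lean document; each statement's English description precedes it below -/
import Mathlib

section
/- Let δ > 0, let ω : ℝ³ → ℝ be measurable with ω ≥ c > 0 on B(0, δ), and let K = ∫_{B(0,δ)} ω(ξ)(ξ ⊗ ξ) dξ, which is symmetric and invertible. For any 3×3 matrices P (effective Piola stress) and Ḟ (rate of the deformation gradient), define the correspondence force state T(ξ) = ω(ξ) P K⁻¹ ξ and the bond velocity Ẏ(ξ) = Ḟ ξ. Then the nonlocal internal power equals the local one: ∫_{B(0,δ)} T(ξ) · (Ḟ ξ) dξ = P : Ḟ, where P : Ḟ = tr(Pᵀ Ḟ) is the Frobenius inner product. -/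
/-!
Contracting `A ξ · B ξ = tr (Bᵀ A (ξ ⊗ ξ))` makes the internal power density linear in `ξ ⊗ ξ`,
so its integral is `tr (Ḟᵀ P K⁻¹ K) = tr (Ḟᵀ P)`. The shape tensor `K` is invertible because
`v · K v = ∫ ω (v · ξ)²`, whose integrand is positive on the ball off the null hyperplane `v⊥`.
-/

open MeasureTheory Matrix

attribute [local instance] Matrix.frobeniusNormedAddCommGroup Matrix.frobeniusNormedSpace
-- The Frobenius topology is the product topology only up to unfolding; removing the latter keeps
-- instance search from mixing the two.
attribute [-instance] instTopologicalSpaceMatrix Matrix.instUniformSpace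

section Algebra

variable {ι R : Type*} [Fintype ι] [CommSemiring R]

theorem Matrix.trace_mul_vecMulVec (C : Matrix ι ι R) (x y : ι → R) :
    (C * vecMulVec x y).trace = C *ᵥ x ⬝ᵥ y := by
  rw [mul_vecMulVec, trace_vecMulVec]

theorem Matrix.mulVec_dotProduct_mulVec_eq_trace (A B : Matrix ι ι R) (x : ι → R) :
    A *ᵥ x ⬝ᵥ B *ᵥ x = (Bᵀ * A * vecMulVec x x).trace := by
  rw [trace_mul_vecMulVec, ← mulVec_mulVec, mulVec_transpose, dotProduct_mulVec]

theorem Matrix.trace_vecMulVec_mul_vecMulVec (v x : ι → R) :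
    (vecMulVec v v * vecMulVec x x).trace = (v ⬝ᵥ x) ^ 2 := by
  rw [trace_mul_vecMulVec, vecMulVec_mulVec]
  simp [sq, smul_dotProduct]

end Algebra

section Integral

variable {α ι : Type*} [Fintype ι] [MeasurableSpace α] {μ : Measure α}

theorem MeasureTheory.integral_trace_mul (C : Matrix ι ι ℝ) {f : α → Matrix ι ι ℝ}
    (hf : Integrable f μ) : ∫ a, (C * f a).trace ∂μ = (C * ∫ a, f a ∂μ).trace :=
  (traceLinearMap ι ℝ ℝ ∘ₗ LinearMap.mulLeft ℝ C).toContinuousLinearMap.integral_comp_comm hf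

theorem MeasureTheory.Integrable.trace_mul (C : Matrix ι ι ℝ) {f : α → Matrix ι ι ℝ}
    (hf : Integrable f μ) : Integrable (fun a => (C * f a).trace) μ :=
  (traceLinearMap ι ℝ ℝ ∘ₗ LinearMap.mulLeft ℝ C).toContinuousLinearMap.integrable_comp hf

end Integral

section ShapeTensor

variable {ι : Type*} [Fintype ι] {μ : Measure (EuclideanSpace ℝ ι)}
  {s : Set (EuclideanSpace ℝ ι)} {ω : EuclideanSpace ℝ ι → ℝ}

noncomputable def shapeTensor (μ : Measure (EuclideanSpace ℝ ι)) (s : Set (EuclideanSpace ℝ ι))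
    (ω : EuclideanSpace ℝ ι → ℝ) : Matrix ι ι ℝ :=
  ∫ ξ in s, ω ξ • vecMulVec ξ.ofLp ξ.ofLp ∂μ

theorem MeasureTheory.IntegrableOn.smul_vecMulVec (hω : IntegrableOn ω s μ)
    (hs : MeasurableSet s) (hs_bdd : Bornology.IsBounded s) :
    IntegrableOn (fun ξ => ω ξ • vecMulVec ξ.ofLp ξ.ofLp) s μ :=
  hω.smul_continuousOn_of_subset (by fun_prop) hs hs_bdd.isCompact_closure subset_closure

theorem integral_smul_mulVec_dotProduct_mulVec
    (hf : IntegrableOn (fun ξ => ω ξ • vecMulVec ξ.ofLp ξ.ofLp) s μ) (A B : Matrix ι ι ℝ) :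
    ∫ ξ in s, (ω ξ • A *ᵥ ξ.ofLp) ⬝ᵥ B *ᵥ ξ.ofLp ∂μ = (Bᵀ * A * shapeTensor μ s ω).trace := by
  simp_rw [smul_dotProduct, mulVec_dotProduct_mulVec_eq_trace, ← trace_smul, ← Matrix.mul_smul]
  exact integral_trace_mul _ hf

theorem dotProduct_shapeTensor_mulVec
    (hf : IntegrableOn (fun ξ => ω ξ • vecMulVec ξ.ofLp ξ.ofLp) s μ) (v : ι → ℝ) :
    v ⬝ᵥ shapeTensor μ s ω *ᵥ v = ∫ ξ in s, ω ξ * (v ⬝ᵥ ξ.ofLp) ^ 2 ∂μ := by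
  rw [dotProduct_comm, ← trace_mul_vecMulVec, trace_mul_comm, shapeTensor, ← integral_trace_mul _ hf]
  simp_rw [Matrix.mul_smul, trace_smul, trace_vecMulVec_mul_vecMulVec, smul_eq_mul]

variable [μ.IsAddHaarMeasure]

theorem setIntegral_mul_sq_dotProduct_pos (hs : MeasurableSet s) (hμs : μ s ≠ 0)
    (hω : ∀ ξ ∈ s, 0 < ω ξ) {v : ι → ℝ} (hv : v ≠ 0)
    (hint : IntegrableOn (fun ξ => ω ξ * (v ⬝ᵥ ξ.ofLp) ^ 2) s μ) :
    0 < ∫ ξ in s, ω ξ * (v ⬝ᵥ ξ.ofLp) ^ 2 ∂μ := by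
  set H := LinearMap.ker (dotProductBilin ℝ ℝ v ∘ₗ (WithLp.linearEquiv 2 ℝ (ι → ℝ)).toLinearMap)
  have hH : μ H = 0 := by
    refine Measure.addHaar_submodule μ H fun hH_top => hv ?_
    have : WithLp.toLp 2 v ∈ H := hH_top ▸ Submodule.mem_top
    simpa [H, dotProductBilin] using this
  have hnonneg : 0 ≤ᵐ[μ.restrict s] fun ξ => ω ξ * (v ⬝ᵥ ξ.ofLp) ^ 2 :=
    (ae_restrict_mem hs).mono fun ξ hξ => mul_nonneg (hω ξ hξ).le (sq_nonneg _)
  rw [setIntegral_pos_iff_support_of_nonneg_ae hnonneg hint]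
  calc 0 < μ s := pos_iff_ne_zero.2 hμs
    _ = μ (s \ H) := (measure_sdiff_null hH).symm
    _ ≤ μ (Function.support (fun ξ => ω ξ * (v ⬝ᵥ ξ.ofLp) ^ 2) ∩ s) :=
      measure_mono fun ξ ⟨hξs, hξH⟩ => ⟨mul_ne_zero (hω ξ hξs).ne' (pow_ne_zero 2 hξH), hξs⟩

theorem isUnit_det_shapeTensor [DecidableEq ι] (hs : MeasurableSet s) (hμs : μ s ≠ 0) (hω : ∀ ξ ∈ s, 0 < ω ξ)
    (hf : IntegrableOn (fun ξ => ω ξ • vecMulVec ξ.ofLp ξ.ofLp) s μ) :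
    IsUnit (shapeTensor μ s ω).det := by
  refine isUnit_iff_ne_zero.2 fun h0 => ?_
  obtain ⟨v, hv, hKv⟩ := exists_mulVec_eq_zero_iff.2 h0
  have hint : IntegrableOn (fun ξ => ω ξ * (v ⬝ᵥ ξ.ofLp) ^ 2) s μ := by
    refine (hf.trace_mul (vecMulVec v v)).congr (ae_of_all _ fun ξ => ?_)
    simp only [Matrix.mul_smul, trace_smul, trace_vecMulVec_mul_vecMulVec, smul_eq_mul]
  have hpos := setIntegral_mul_sq_dotProduct_pos hs hμs hω hv hint
  rw [← dotProduct_shapeTensor_mulVec hf, hKv, dotProduct_zero] at hpos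
  exact hpos.false

end ShapeTensor

theorem correspondence_internal_power_eq_local_general
    (δ c : ℝ) (hδ : 0 < δ) (hc : 0 < c)
    (ω : EuclideanSpace ℝ (Fin 3) → ℝ)
    (hω_int : IntegrableOn ω (Metric.ball (0 : EuclideanSpace ℝ (Fin 3)) δ))
    (hω_lb : ∀ ξ ∈ Metric.ball (0 : EuclideanSpace ℝ (Fin 3)) δ, c ≤ ω ξ)
    (K : Matrix (Fin 3) (Fin 3) ℝ)
    (hK : K = ∫ ξ in Metric.ball (0 : EuclideanSpace ℝ (Fin 3)) δ,
        ω ξ • Matrix.vecMulVec (fun i => ξ i) (fun i => ξ i))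
    (P Fdot : Matrix (Fin 3) (Fin 3) ℝ)
    (T : EuclideanSpace ℝ (Fin 3) → (Fin 3 → ℝ))
    (hT : ∀ ξ, T ξ = ω ξ • (P * K⁻¹).mulVec (fun i => ξ i)) :
    ∫ ξ in Metric.ball (0 : EuclideanSpace ℝ (Fin 3)) δ,
        T ξ ⬝ᵥ Fdot.mulVec (fun i => ξ i) = (Pᵀ * Fdot).trace := by
  change K = shapeTensor volume _ ω at hK
  have hf := hω_int.smul_vecMulVec measurableSet_ball Metric.isBounded_ball
  have hK_det : IsUnit K.det := hK ▸ isUnit_det_shapeTensor measurableSet_ball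
    (Metric.measure_ball_pos volume 0 hδ).ne' (fun ξ hξ => hc.trans_le (hω_lb ξ hξ)) hf
  simp_rw [hT]
  rw [integral_smul_mulVec_dotProduct_mulVec hf, ← hK, Matrix.mul_assoc, Matrix.mul_assoc,
    nonsing_inv_mul K hK_det, Matrix.mul_one, ← trace_transpose, transpose_mul, transpose_transpose]

/-- **Constitutive correspondence principle: nonlocal internal power equals local power.**
For the correspondence force state `T(ξ) = ω(ξ) P K⁻¹ ξ` and a homogeneous bond
velocity `Ẏ(ξ) = Ḟ ξ`, one has
`∫_{B(0,δ)} T(ξ) · (Ḟ ξ) dξ = P : Ḟ = tr(Pᵀ Ḟ)`. -/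
theorem correspondence_internal_power_eq_local
    (δ c : ℝ) (hδ : 0 < δ) (hc : 0 < c)
    (ω : EuclideanSpace ℝ (Fin 3) → ℝ)
    (hω_meas : Measurable ω)
    (hω_int : IntegrableOn ω (Metric.ball (0 : EuclideanSpace ℝ (Fin 3)) δ))
    (hω_lb : ∀ ξ ∈ Metric.ball (0 : EuclideanSpace ℝ (Fin 3)) δ, c ≤ ω ξ)
    (K : Matrix (Fin 3) (Fin 3) ℝ)
    (hK : K = ∫ ξ in Metric.ball (0 : EuclideanSpace ℝ (Fin 3)) δ,
        ω ξ • Matrix.vecMulVec (fun i => ξ i) (fun i => ξ i))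
    (P Fdot : Matrix (Fin 3) (Fin 3) ℝ)
    (T : EuclideanSpace ℝ (Fin 3) → (Fin 3 → ℝ))
    (hT : ∀ ξ, T ξ = ω ξ • (P * K⁻¹).mulVec (fun i => ξ i)) :
    ∫ ξ in Metric.ball (0 : EuclideanSpace ℝ (Fin 3)) δ,
        T ξ ⬝ᵥ Fdot.mulVec (fun i => ξ i) = (Pᵀ * Fdot).trace :=
  correspondence_internal_power_eq_local_general δ c hδ hc ω hω_int hω_lb K hK P Fdot T hT
end

section
/- For every δ > 0, the iterated integral over all bonds of length at most δ that cross a unit-area plane—namely I(δ) = ∫_{z=0}^{δ} ∫_{ξ=z}^{δ} ∫_{φ=0}^{arccos(z/ξ)} ∫_{ψ=0}^{2π} ξ² sin φ dψ dφ dξ dz—equals π δ⁴ / 4. Consequently, if every such bond carries a constant bond energy density W, the total energy consumed per unit fracture area is W · π δ⁴ / 4, and this equals a prescribed critical energy release rate G_cr if and only if W = 4 G_cr / (π δ⁴). -/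
open Real

/-
A bond of length `ξ` from depth `z` crosses the plane iff its angle to the normal is at most
`arccos (z / ξ)`; the solid angle of that cap is `2π (1 - z / ξ)`, so the bonds from depth `z`
fill `∫_z^δ 2π ξ (ξ - z) dξ`, a cubic polynomial in `z` whose integral over `[0, δ]` is `π δ⁴ / 4`.
-/

theorem integral_sin_zero_arccos {x : ℝ} (hx₁ : -1 ≤ x) (hx₂ : x ≤ 1) :
    ∫ φ in (0 : ℝ)..arccos x, sin φ = 1 - x := by
  rw [integral_sin, cos_zero, cos_arccos hx₁ hx₂]

/-- The junk value `z / 0 = 0` makes this hold at `ξ = 0` too. -/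
theorem integral_bonds_crossing_at_length {z ξ : ℝ} (h : |z| ≤ |ξ|) :
    ∫ φ in (0 : ℝ)..arccos (z / ξ), ∫ _ in (0 : ℝ)..(2 * π), ξ ^ 2 * sin φ =
      2 * π * ξ * (ξ - z) := by
  have hx : -1 ≤ z / ξ ∧ z / ξ ≤ 1 :=
    abs_le.mp (by rw [abs_div]; exact div_le_one_of_le₀ h (abs_nonneg _))
  simp only [intervalIntegral.integral_const, smul_eq_mul, sub_zero,
    intervalIntegral.integral_const_mul, integral_sin_zero_arccos hx.1 hx.2]
  rcases eq_or_ne ξ 0 with rfl | hξ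
  · simp
  · field_simp

theorem integral_bonds_crossing_from_depth {z δ : ℝ} (hz : 0 ≤ z) (hzδ : z ≤ δ) :
    ∫ ξ in z..δ, ∫ φ in (0 : ℝ)..arccos (z / ξ), ∫ _ in (0 : ℝ)..(2 * π), ξ ^ 2 * sin φ =
      2 * π * δ ^ 3 / 3 - π * δ ^ 2 * z + π / 3 * z ^ 3 := by
  have hlength : Set.EqOn
      (fun ξ => ∫ φ in (0 : ℝ)..arccos (z / ξ), ∫ _ in (0 : ℝ)..(2 * π), ξ ^ 2 * sin φ)
      (fun ξ => 2 * π * ξ * (ξ - z)) (Set.uIcc z δ) := by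
    intro ξ hξ
    rw [Set.uIcc_of_le hzδ] at hξ
    exact integral_bonds_crossing_at_length
      (by rw [abs_of_nonneg hz, abs_of_nonneg (hz.trans hξ.1)]; exact hξ.1)
  rw [intervalIntegral.integral_congr hlength]
  have hpoly : (fun ξ : ℝ => 2 * π * ξ * (ξ - z)) = fun ξ => 2 * π * ξ ^ 2 - 2 * π * z * ξ := by
    ext ξ; ring
  rw [hpoly, intervalIntegral.integral_sub (Continuous.intervalIntegrable (by fun_prop) _ _)
      (Continuous.intervalIntegrable (by fun_prop) _ _),
    intervalIntegral.integral_const_mul, intervalIntegral.integral_const_mul,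
    integral_pow, integral_id]
  ring

theorem integral_bonds_crossing_plane {δ : ℝ} (hδ : 0 ≤ δ) :
    ∫ z in (0 : ℝ)..δ, ∫ ξ in z..δ, ∫ φ in (0 : ℝ)..arccos (z / ξ),
        ∫ _ in (0 : ℝ)..(2 * π), ξ ^ 2 * sin φ = π * δ ^ 4 / 4 := by
  have hdepth : Set.EqOn
      (fun z => ∫ ξ in z..δ, ∫ φ in (0 : ℝ)..arccos (z / ξ),
        ∫ _ in (0 : ℝ)..(2 * π), ξ ^ 2 * sin φ)
      (fun z => 2 * π * δ ^ 3 / 3 - π * δ ^ 2 * z + π / 3 * z ^ 3) (Set.uIcc 0 δ) := by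
    intro z hz
    rw [Set.uIcc_of_le hδ] at hz
    exact integral_bonds_crossing_from_depth hz.1 hz.2
  rw [intervalIntegral.integral_congr hdepth,
    intervalIntegral.integral_add (Continuous.intervalIntegrable (by fun_prop) _ _)
      (Continuous.intervalIntegrable (by fun_prop) _ _),
    intervalIntegral.integral_sub (Continuous.intervalIntegrable (by fun_prop) _ _)
      (Continuous.intervalIntegrable (by fun_prop) _ _),
    intervalIntegral.integral_const, intervalIntegral.integral_const_mul,
    intervalIntegral.integral_const_mul, integral_pow, integral_id, smul_eq_mul]
  ring

/-- **Critical bond energy density from the critical energy release rate.**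
The volume integral over all bonds of length at most `δ` crossing a unit-area
plane equals `π δ⁴ / 4`; hence a constant bond energy density `W` consumes
`W · π δ⁴ / 4` per unit fracture area, which equals the critical energy release
rate `G_cr` if and only if `W = 4 G_cr / (π δ⁴)`. -/
theorem bond_breakage_energy_integral (δ : ℝ) (hδ : 0 < δ) :
    (∫ z in (0 : ℝ)..δ, ∫ ξ in z..δ, ∫ φ in (0 : ℝ)..(Real.arccos (z / ξ)),
        ∫ ψ in (0 : ℝ)..(2 * π), ξ ^ 2 * Real.sin φ) = π * δ ^ 4 / 4 ∧
    ∀ W Gcr : ℝ, W * (π * δ ^ 4 / 4) = Gcr ↔ W = 4 * Gcr / (π * δ ^ 4) := by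
  refine ⟨integral_bonds_crossing_plane hδ.le, fun W Gcr => ?_⟩
  rw [eq_div_iff (by positivity)]
  constructor <;> intro h <;> linarith
end
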